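/- For all real numbers α > 0 and β > 0, the function z ↦ H_{−β/α−1}(z) / H_{−β/α}(z) is bounded on [0,∞); that is, there exists a constant C > 0 such that H_{−β/α−1}(z) ≤ C · H_{−β/α}(z) for all z ≥ 0. In particular, the process ν in the explicit solution of the logarithmic-utility example, given by ν_t = −sgn(R_t)·h(|R_t|/√2) with h(z) = −(2β/α)·H_{−β/α−1}(z)/H_{−β/α}(z), is a bounded process. -/

import Mathlib

/-- The Hermite function `H_ξ(x)`, defined for `ξ < 0` and `x ≥ 0` by the convergent
integral `H_ξ(x) = (1/(2Γ(−ξ))) ∫_0^∞ e^{−s−2x√s} s^{−ξ/2−1} ds`. -/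
noncomputable def hermiteH (ξ x : ℝ) : ℝ :=
  (1 / (2 * Real.Gamma (-ξ))) *
    ∫ s in Set.Ioi (0 : ℝ), Real.exp (-s - 2 * x * Real.sqrt s) * s ^ (-ξ / 2 - 1)

/-! With `q = -ξ/2 - 1`, the integrand of `H_{ξ-1}(x)` is that of `H_ξ(x)` times `√s`.
Since `√s e^{-s} ≤ e^{-s/2}`, the substitution `s = 2u` bounds the integral for `H_{ξ-1}(x)` by
`2^{q+1}` times the integral for `H_ξ(√2 x)`, and the integrand is decreasing in `x`.
Together with `Γ(1-ξ) = -ξ Γ(-ξ)` this gives `H_{ξ-1}(x) ≤ 2^{-ξ/2} / (-ξ) · H_ξ(x)`. -/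

open Real MeasureTheory Set

lemma sqrt_le_exp_half (s : ℝ) : √s ≤ exp (s / 2) := by
  rcases le_or_gt 0 s with hs | hs
  · nlinarith [sq_sqrt hs, sq_nonneg (√s - 1), add_one_le_exp (s / 2)]
  · rw [sqrt_eq_zero_of_nonpos hs.le]
    exact (exp_pos _).le

lemma integrableOn_exp_neg_mul_sub_mul_sqrt_mul_rpow {c b q : ℝ} (hc : 0 < c) (hb : 0 ≤ b)
    (hq : -1 < q) :
    IntegrableOn (fun s => exp (-(c * s) - b * √s) * s ^ q) (Ioi 0) := by
  refine (integrableOn_rpow_mul_exp_neg_mul_rpow hq one_pos hc).mono' (by fun_prop) ?_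
  refine (ae_restrict_iff' measurableSet_Ioi).mpr (ae_of_all _ fun s (hs : 0 < s) => ?_)
  have hexp : exp (-(c * s) - b * √s) ≤ exp (-c * s) :=
    exp_le_exp.mpr (by nlinarith [sqrt_nonneg s])
  rw [norm_mul, norm_of_nonneg (exp_pos _).le, norm_of_nonneg (rpow_nonneg hs.le _),
    rpow_one, mul_comm]
  exact mul_le_mul_of_nonneg_left hexp (rpow_nonneg hs.le _)

lemma setIntegral_exp_sub_mul_sqrt_mul_rpow_le_of_le {b b' q : ℝ} (hb : 0 ≤ b) (hbb' : b ≤ b')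
    (hq : -1 < q) :
    ∫ s in Ioi 0, exp (-s - b' * √s) * s ^ q ≤ ∫ s in Ioi 0, exp (-s - b * √s) * s ^ q := by
  refine setIntegral_mono_on ?_ ?_ measurableSet_Ioi fun s (hs : 0 < s) => ?_
  · simpa using integrableOn_exp_neg_mul_sub_mul_sqrt_mul_rpow one_pos (hb.trans hbb') hq
  · simpa using integrableOn_exp_neg_mul_sub_mul_sqrt_mul_rpow one_pos hb hq
  refine mul_le_mul_of_nonneg_right (exp_le_exp.mpr ?_) (rpow_nonneg hs.le _)
  nlinarith [sqrt_nonneg s]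

lemma setIntegral_exp_neg_inv_mul_sub_mul_sqrt_mul_rpow {a : ℝ} (ha : 0 < a) (b q : ℝ) :
    ∫ s in Ioi 0, exp (-(a⁻¹ * s) - b * √s) * s ^ q =
      a ^ (q + 1) * ∫ u in Ioi 0, exp (-u - b * √a * √u) * u ^ q := by
  have hsub := integral_comp_mul_left_Ioi (fun s => exp (-(a⁻¹ * s) - b * √s) * s ^ q) 0 ha
  rw [mul_zero, smul_eq_mul] at hsub
  have hscaled : ∀ u ∈ Ioi (0 : ℝ), exp (-(a⁻¹ * (a * u)) - b * √(a * u)) * (a * u) ^ q =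
      a ^ q * (exp (-u - b * √a * √u) * u ^ q) := fun u (hu : 0 < u) => by
    rw [inv_mul_cancel_left₀ ha.ne', sqrt_mul ha.le, mul_rpow ha.le hu.le]
    ring_nf
  rw [setIntegral_congr_fun measurableSet_Ioi hscaled, integral_const_mul] at hsub
  rw [rpow_add_one ha.ne', mul_right_comm, hsub]
  field_simp

lemma setIntegral_exp_sub_mul_sqrt_mul_rpow_add_half_le {b q : ℝ} (hb : 0 ≤ b) (hq : -1 < q) :
    ∫ s in Ioi 0, exp (-s - b * √s) * s ^ (q + 1 / 2) ≤
      2 ^ (q + 1) * ∫ s in Ioi 0, exp (-s - b * √s) * s ^ q := by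
  have hhalf : ∫ s in Ioi 0, exp (-s - b * √s) * s ^ (q + 1 / 2) ≤
      ∫ s in Ioi 0, exp (-(2⁻¹ * s) - b * √s) * s ^ q := by
    refine setIntegral_mono_on ?_ (integrableOn_exp_neg_mul_sub_mul_sqrt_mul_rpow
      (by norm_num) hb hq) measurableSet_Ioi fun s (hs : 0 < s) => ?_
    · simpa using integrableOn_exp_neg_mul_sub_mul_sqrt_mul_rpow one_pos hb (by linarith)
    have hsplit : s ^ (q + 1 / 2) = √s * s ^ q := by
      rw [sqrt_eq_rpow, ← rpow_add hs, add_comm]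
    have hexp : exp (-s - b * √s) * exp (s / 2) = exp (-(2⁻¹ * s) - b * √s) := by
      rw [← exp_add]; ring_nf
    rw [hsplit, ← mul_assoc, ← hexp]
    gcongr
    exact sqrt_le_exp_half s
  have hsqrt_two : b ≤ b * √2 := le_mul_of_one_le_right hb (one_le_sqrt.mpr one_le_two)
  calc _ ≤ ∫ s in Ioi 0, exp (-(2⁻¹ * s) - b * √s) * s ^ q := hhalf
    _ = 2 ^ (q + 1) * ∫ u in Ioi 0, exp (-u - b * √2 * √u) * u ^ q :=
      setIntegral_exp_neg_inv_mul_sub_mul_sqrt_mul_rpow two_pos b q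
    _ ≤ _ := mul_le_mul_of_nonneg_left
      (setIntegral_exp_sub_mul_sqrt_mul_rpow_le_of_le hb hsqrt_two hq) (by positivity)

lemma hermiteH_sub_one_le {ξ x : ℝ} (hξ : ξ < 0) (hx : 0 ≤ x) :
    hermiteH (ξ - 1) x ≤ 2 ^ (-ξ / 2) / -ξ * hermiteH ξ x := by
  have hΓ : Gamma (-(ξ - 1)) = -ξ * Gamma (-ξ) := by
    rw [neg_sub', sub_neg_eq_add, Gamma_add_one (by linarith)]
  have hint := setIntegral_exp_sub_mul_sqrt_mul_rpow_add_half_le (q := -ξ / 2 - 1)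
    (mul_nonneg zero_le_two hx) (by linarith)
  rw [show -ξ / 2 - 1 + 1 / 2 = -(ξ - 1) / 2 - 1 by ring, sub_add_cancel] at hint
  have hξ' : 0 < -ξ := neg_pos.mpr hξ
  have hΓpos : 0 < Gamma (-ξ) := Gamma_pos_of_pos hξ'
  unfold hermiteH
  rw [hΓ]
  calc _ ≤ 1 / (2 * (-ξ * Gamma (-ξ))) *
        (2 ^ (-ξ / 2) * ∫ s in Ioi 0, exp (-s - 2 * x * √s) * s ^ (-ξ / 2 - 1)) := by
        gcongr
    _ = _ := by field_simp

/-- For all `α > 0` and `β > 0`, the function `z ↦ H_{−β/α−1}(z) / H_{−β/α}(z)` is bounded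
on `[0,∞)`: there is a constant `C > 0` with `H_{−β/α−1}(z) ≤ C · H_{−β/α}(z)` for all
`z ≥ 0`.  (In particular the process `ν_t = −sgn(R_t) h(|R_t|/√2)`, with
`h(z) = −(2β/α) H_{−β/α−1}(z)/H_{−β/α}(z)`, is bounded.) -/
theorem hermite_ratio_bounded (α β : ℝ) (hα : 0 < α) (hβ : 0 < β) :
    ∃ C : ℝ, 0 < C ∧ ∀ z : ℝ, 0 ≤ z →
      hermiteH (-β / α - 1) z ≤ C * hermiteH (-β / α) z := by
  have hξ : -β / α < 0 := div_neg_of_neg_of_pos (neg_neg_of_pos hβ) hα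
  exact ⟨2 ^ (-(-β / α) / 2) / -(-β / α), div_pos (rpow_pos_of_pos two_pos _) (neg_pos.mpr hξ),
    fun z hz => hermiteH_sub_one_le hξ hz⟩
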